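/- Let N ≥ 5, let μ_j, λ_j ∈ (0,1) with μ_j + λ_j = 1 for j = 1,…,N−1, set β₁ := (1−2μ₁)/(2(2−μ₁)) and β₂ := (1−2λ_{N−1})/(2(2−λ_{N−1})), and let A_t ∈ ℝ^{(N−1)×(N−1)} be the tridiagonal matrix with rows indexed by 1,…,N−1 given by: row 1 has entries 2−μ₁ and (1−2μ₁)/2 in columns 1, 2; row 2 has entries μ₂, 2−β₁μ₂, λ₂ in columns 1, 2, 3; row j for 3 ≤ j ≤ N−3 has entries μ_j, 2, λ_j in columns j−1, j, j+1; row N−2 has entries μ_{N−2}, 2−β₂λ_{N−2}, λ_{N−2} in columns N−3, N−2, N−1; row N−1 has entries (1−2λ_{N−1})/2 and 2−λ_{N−1} in columns N−2, N−1; all other entries are zero. Then β₁, β₂ ∈ (−1/2, 1/4), A_t is strictly diagonally dominant by rows with min_i (|a_{ii}| − Σ_{j≠i} |a_{ij}|) ≥ 1/2, and consequently A_t is invertible with ‖A_t⁻¹‖_∞ ≤ 2. -/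

import Mathlib

/-!
Each row of `A_t` is dominated with gap `1/2`: the interior rows weigh `μ_j + λ_j = 1` against
a diagonal `2`; in rows `2` and `N − 2` the diagonal `2 − βr` with `β < 1/4`, `r ∈ (0,1)` is still
at least `3/2`; the boundary rows reduce to `|1/2 − x| + 1/2 ≤ 2 − x` for `x ≤ 1`.

A gap `δ` bounds `‖A⁻¹‖_∞` by `1/δ` (Varah): if `y` is the sign vector of row `i` of `A⁻¹`, then
`x = A⁻¹ y` has `x_i = ∑_j |(A⁻¹)_{ij}|`, and at a coordinate `k` where `|x_k|` is maximal,
dominance of row `k` gives `δ |x_k| ≤ |(A x)_k| = |y_k| ≤ 1`.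
-/

open Finset Matrix

/-- The matrix norm induced by the max norm on `ℝⁿ`: the maximum absolute row sum. -/
noncomputable def rowSumNorm {n : ℕ} (A : Matrix (Fin n) (Fin n) ℝ) : ℝ :=
  ⨆ i, ∑ j, |A i j|

lemma sum_abs_erase_le_of_eq_zero {ι : Type*} [Fintype ι] [DecidableEq ι] {f : ι → ℝ} {i : ι}
    (s : Finset ι) (hf : ∀ j, j ≠ i → j ∉ s → f j = 0) :
    ∑ j ∈ univ.erase i, |f j| ≤ ∑ j ∈ s, |f j| :=
  calc ∑ j ∈ univ.erase i, |f j| = ∑ j ∈ univ.erase i ∩ s, |f j| := by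
        refine (sum_subset inter_subset_left fun j hj hjs => ?_).symm
        rw [hf j (ne_of_mem_erase hj) fun h => hjs (mem_inter.2 ⟨hj, h⟩), abs_zero]
    _ ≤ ∑ j ∈ s, |f j| :=
        sum_le_sum_of_subset_of_nonneg inter_subset_right fun j _ _ => abs_nonneg _

def DiagDominantBy {ι : Type*} [Fintype ι] [DecidableEq ι] (δ : ℝ) (A : Matrix ι ι ℝ) : Prop :=
  ∀ i, ∑ j ∈ univ.erase i, |A i j| + δ ≤ |A i i|

namespace DiagDominantBy

variable {ι : Type*} [Fintype ι] [DecidableEq ι] {A : Matrix ι ι ℝ} {δ : ℝ}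

lemma mul_abs_le_abs_mulVec (hA : DiagDominantBy δ A) (x : ι → ℝ) {k : ι}
    (hk : ∀ j, |x j| ≤ |x k|) : δ * |x k| ≤ |(A *ᵥ x) k| := by
  have hsplit : (A *ᵥ x) k = A k k * x k + ∑ j ∈ univ.erase k, A k j * x j :=
    (add_sum_erase _ (fun j => A k j * x j) (mem_univ k)).symm
  have hoff : |∑ j ∈ univ.erase k, A k j * x j| ≤ (∑ j ∈ univ.erase k, |A k j|) * |x k| :=
    calc |∑ j ∈ univ.erase k, A k j * x j| ≤ ∑ j ∈ univ.erase k, |A k j * x j| :=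
          abs_sum_le_sum_abs _ _
      _ ≤ ∑ j ∈ univ.erase k, |A k j| * |x k| := sum_le_sum fun j _ => by
          rw [abs_mul]; exact mul_le_mul_of_nonneg_left (hk j) (abs_nonneg _)
      _ = (∑ j ∈ univ.erase k, |A k j|) * |x k| := (sum_mul ..).symm
  have hdiag : |A k k * x k| ≤ |(A *ᵥ x) k| + |∑ j ∈ univ.erase k, A k j * x j| := by
    rw [show A k k * x k = (A *ᵥ x) k - ∑ j ∈ univ.erase k, A k j * x j by rw [hsplit]; ring]
    exact abs_sub _ _
  rw [abs_mul] at hdiag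
  nlinarith [mul_le_mul_of_nonneg_right (hA k) (abs_nonneg (x k))]

lemma det_ne_zero (hA : DiagDominantBy δ A) (hδ : 0 < δ) : A.det ≠ 0 :=
  det_ne_zero_of_sum_row_lt_diag fun k => by simp only [Real.norm_eq_abs]; linarith [hA k]

lemma isUnit (hA : DiagDominantBy δ A) (hδ : 0 < δ) : IsUnit A :=
  (isUnit_iff_isUnit_det A).2 (hA.det_ne_zero hδ).isUnit

lemma sum_abs_inv_le (hA : DiagDominantBy δ A) (hδ : 0 < δ) (i : ι) :
    ∑ j, |A⁻¹ i j| ≤ δ⁻¹ := by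
  have : Nonempty ι := ⟨i⟩
  set y : ι → ℝ := fun j => SignType.sign (A⁻¹ i j)
  set x := A⁻¹ *ᵥ y
  have hAx : A *ᵥ x = y := by
    rw [mulVec_mulVec, mul_nonsing_inv _ (hA.det_ne_zero hδ).isUnit, one_mulVec]
  have hxi : x i = ∑ j, |A⁻¹ i j| := sum_congr rfl fun j _ => self_mul_sign _
  obtain ⟨k, hk⟩ := Finite.exists_max fun j => |x j|
  have hyk : |y k| ≤ 1 := by
    simp only [y]; rcases SignType.sign (A⁻¹ i k) with _ | _ | _ <;> simp
  have hgap := hA.mul_abs_le_abs_mulVec x hk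
  rw [hAx] at hgap
  rw [← hxi, ← one_div, le_div_iff₀' hδ]
  nlinarith [le_abs_self (x i), hk i]

end DiagDominantBy

lemma DiagDominantBy.rowSumNorm_inv_le {n : ℕ} {A : Matrix (Fin n) (Fin n) ℝ} {δ : ℝ}
    (hA : DiagDominantBy δ A) (hδ : 0 < δ) : rowSumNorm A⁻¹ ≤ δ⁻¹ :=
  Real.iSup_le (hA.sum_abs_inv_le hδ) (inv_nonneg.2 hδ.le)

-- Row and column `i : Fin (N - 1)` are row and column `i + 1` of the paper's `A_t`.
noncomputable def notAKnotMatrix (N : ℕ) (μ lam : ℕ → ℝ) (β₁ β₂ : ℝ) :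
    Matrix (Fin (N - 1)) (Fin (N - 1)) ℝ :=
  of fun i j =>
    if (i : ℕ) + 1 = 1 then
      (if (j : ℕ) + 1 = 1 then 2 - μ 1
       else if (j : ℕ) + 1 = 2 then (1 - 2 * μ 1) / 2 else 0)
    else if (i : ℕ) + 1 = 2 then
      (if (j : ℕ) + 1 = 1 then μ 2
       else if (j : ℕ) + 1 = 2 then 2 - β₁ * μ 2
       else if (j : ℕ) + 1 = 3 then lam 2 else 0)
    else if (i : ℕ) + 1 = N - 2 then
      (if (j : ℕ) + 1 = N - 3 then μ (N - 2)
       else if (j : ℕ) + 1 = N - 2 then 2 - β₂ * lam (N - 2)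
       else if (j : ℕ) + 1 = N - 1 then lam (N - 2) else 0)
    else if (i : ℕ) + 1 = N - 1 then
      (if (j : ℕ) + 1 = N - 2 then (1 - 2 * lam (N - 1)) / 2
       else if (j : ℕ) + 1 = N - 1 then 2 - lam (N - 1) else 0)
    else
      (if (j : ℕ) + 1 + 1 = (i : ℕ) + 1 then μ ((i : ℕ) + 1)
       else if (j : ℕ) = (i : ℕ) then 2
       else if (j : ℕ) + 1 = (i : ℕ) + 1 + 1 then lam ((i : ℕ) + 1) else 0)

lemma one_sub_two_mul_div_mem_Ioo {x : ℝ} (hx : x ∈ Set.Ioo 0 1) :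
    (1 - 2 * x) / (2 * (2 - x)) ∈ Set.Ioo (-(1 / 2)) (1 / 4) := by
  obtain ⟨hx0, hx1⟩ := hx
  constructor
  · rw [lt_div_iff₀ (by linarith)]; linarith
  · rw [div_lt_iff₀ (by linarith)]; linarith

lemma abs_one_sub_two_mul_div_two_add_half_le {x : ℝ} (hx : x ≤ 1) :
    |(1 - 2 * x) / 2| + 1 / 2 ≤ |2 - x| := by
  rw [abs_of_pos (by linarith : 0 < 2 - x)]
  cases abs_cases ((1 - 2 * x) / 2) <;> linarith

lemma three_halves_le_two_sub_mul {β r : ℝ} (hβ : β < 1 / 4) (hr0 : 0 ≤ r) (hr1 : r ≤ 1) :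
    3 / 2 ≤ 2 - β * r := by
  nlinarith

section NotAKnotMatrix

variable {N : ℕ} {μ lam : ℕ → ℝ} {β₁ β₂ : ℝ}

lemma notAKnotMatrix_first_row_dominant (hN : 5 ≤ N) (hμ : μ 1 ≤ 1) {i : Fin (N - 1)}
    (hi : (i : ℕ) = 0) :
    ∑ j ∈ univ.erase i, |notAKnotMatrix N μ lam β₁ β₂ i j| + 1 / 2 ≤
      |notAKnotMatrix N μ lam β₁ β₂ i i| := by
  have hoff : ∑ j ∈ univ.erase i, |notAKnotMatrix N μ lam β₁ β₂ i j| ≤ |(1 - 2 * μ 1) / 2| := by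
    refine (sum_abs_erase_le_of_eq_zero {⟨1, by omega⟩} fun j hji hj => ?_).trans ?_
    · simp only [mem_singleton, Fin.ext_iff, Ne] at hji hj
      simp only [notAKnotMatrix, of_apply]
      split_ifs <;> first | rfl | omega
    · simp [notAKnotMatrix, hi]
  have hdiag : notAKnotMatrix N μ lam β₁ β₂ i i = 2 - μ 1 := by simp [notAKnotMatrix, hi]
  rw [hdiag]
  linarith [abs_one_sub_two_mul_div_two_add_half_le hμ]

lemma notAKnotMatrix_last_row_dominant (hN : 5 ≤ N) (hlam : lam (N - 1) ≤ 1) {i : Fin (N - 1)}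
    (hi : (i : ℕ) = N - 2) :
    ∑ j ∈ univ.erase i, |notAKnotMatrix N μ lam β₁ β₂ i j| + 1 / 2 ≤
      |notAKnotMatrix N μ lam β₁ β₂ i i| := by
  have hoff : ∑ j ∈ univ.erase i, |notAKnotMatrix N μ lam β₁ β₂ i j| ≤
      |(1 - 2 * lam (N - 1)) / 2| := by
    refine (sum_abs_erase_le_of_eq_zero {⟨N - 3, by omega⟩} fun j hji hj => ?_).trans ?_
    · simp only [mem_singleton, Fin.ext_iff, Ne] at hji hj
      simp only [notAKnotMatrix, of_apply]
      split_ifs <;> first | rfl | omega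
    · simp only [sum_singleton, notAKnotMatrix, of_apply]
      split_ifs <;> first | rfl | omega
  have hdiag : notAKnotMatrix N μ lam β₁ β₂ i i = 2 - lam (N - 1) := by
    simp only [notAKnotMatrix, of_apply]
    split_ifs <;> first | rfl | omega
  rw [hdiag]
  linarith [abs_one_sub_two_mul_div_two_add_half_le hlam]

-- Rows `2` and `N − 2` share the off-diagonal entries `μ_{i+1}, λ_{i+1}` of the interior rows.
lemma notAKnotMatrix_middle_row_dominant (hN : 5 ≤ N)
    (hμlam : ∀ j, 1 ≤ j → j ≤ N - 1 →
      μ j ∈ Set.Ioo (0 : ℝ) 1 ∧ lam j ∈ Set.Ioo (0 : ℝ) 1 ∧ μ j + lam j = 1)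
    (hβ₁ : β₁ < 1 / 4) (hβ₂ : β₂ < 1 / 4) {i : Fin (N - 1)} (hi₁ : 1 ≤ (i : ℕ))
    (hi₂ : (i : ℕ) + 3 ≤ N) :
    ∑ j ∈ univ.erase i, |notAKnotMatrix N μ lam β₁ β₂ i j| + 1 / 2 ≤
      |notAKnotMatrix N μ lam β₁ β₂ i i| := by
  have hoff : ∑ j ∈ univ.erase i, |notAKnotMatrix N μ lam β₁ β₂ i j| ≤
      |μ (i + 1)| + |lam (i + 1)| := by
    refine (sum_abs_erase_le_of_eq_zero {⟨i - 1, by omega⟩, ⟨i + 1, by omega⟩}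
      fun j hji hj => ?_).trans ?_
    · simp only [mem_insert, mem_singleton, Fin.ext_iff, not_or, Ne] at hji hj
      simp only [notAKnotMatrix, of_apply]
      split_ifs <;> first | rfl | omega
    · rw [sum_pair (by simp only [Ne, Fin.ext_iff]; omega)]
      simp only [notAKnotMatrix, of_apply]
      split_ifs <;> first | omega | exact le_of_eq (by congr 3 <;> omega)
  have hdiag : 3 / 2 ≤ notAKnotMatrix N μ lam β₁ β₂ i i := by
    obtain ⟨⟨hμ0, hμ1⟩, -, -⟩ := hμlam 2 (by omega) (by omega)
    obtain ⟨-, ⟨hlam0, hlam1⟩, -⟩ := hμlam (N - 2) (by omega) (by omega)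
    simp only [notAKnotMatrix, of_apply]
    split_ifs <;> first | omega |
      exact three_halves_le_two_sub_mul hβ₁ hμ0.le hμ1.le |
      exact three_halves_le_two_sub_mul hβ₂ hlam0.le hlam1.le | norm_num
  obtain ⟨⟨hμ0, -⟩, ⟨hlam0, -⟩, hsum⟩ := hμlam (i + 1) (by omega) (by omega)
  rw [abs_of_pos hμ0, abs_of_pos hlam0] at hoff
  rw [abs_of_pos (by linarith)]
  linarith

lemma notAKnotMatrix_diagDominantBy (hN : 5 ≤ N)
    (hμlam : ∀ j, 1 ≤ j → j ≤ N - 1 →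
      μ j ∈ Set.Ioo (0 : ℝ) 1 ∧ lam j ∈ Set.Ioo (0 : ℝ) 1 ∧ μ j + lam j = 1)
    (hβ₁ : β₁ < 1 / 4) (hβ₂ : β₂ < 1 / 4) :
    DiagDominantBy (1 / 2) (notAKnotMatrix N μ lam β₁ β₂) := by
  intro i
  have hi := i.isLt
  rcases Nat.eq_zero_or_pos i with h | h
  · exact notAKnotMatrix_first_row_dominant hN (hμlam 1 le_rfl (by omega)).1.2.le h
  by_cases h' : (i : ℕ) = N - 2
  · exact notAKnotMatrix_last_row_dominant hN (hμlam (N - 1) (by omega) le_rfl).2.1.2.le h'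
  exact notAKnotMatrix_middle_row_dominant hN hμlam hβ₁ hβ₂ h (by omega)

end NotAKnotMatrix

/-- **The transformed not-a-knot system `A_t` is strictly diagonally dominant.**
Let `N ≥ 5`, `μ_j, λ_j ∈ (0,1)` with `μ_j + λ_j = 1` for `j = 1, …, N−1`, and set
`β₁ = (1−2μ₁)/(2(2−μ₁))`, `β₂ = (1−2λ_{N−1})/(2(2−λ_{N−1}))`.  Let
`A_t ∈ ℝ^{(N−1)×(N−1)}` have rows indexed by `1, …, N−1` (here realized by `Fin (N−1)`
with index `i` standing for row `i+1`): row `1` has entries `2−μ₁` and `(1−2μ₁)/2` in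
columns `1, 2`; row `2` has entries `μ₂, 2−β₁μ₂, λ₂` in columns `1, 2, 3`; row `j`
(`3 ≤ j ≤ N−3`) has entries `μ_j, 2, λ_j` in columns `j−1, j, j+1`; row `N−2` has entries
`μ_{N−2}, 2−β₂λ_{N−2}, λ_{N−2}` in columns `N−3, N−2, N−1`; row `N−1` has entries
`(1−2λ_{N−1})/2` and `2−λ_{N−1}` in columns `N−2, N−1`; all other entries zero.  Then
`β₁, β₂ ∈ (−1/2, 1/4)`, `A_t` is strictly diagonally dominant by rows with dominance gap
at least `1/2`, and consequently `A_t` is invertible with `‖A_t⁻¹‖_∞ ≤ 2`. -/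
theorem stmt12 (N : ℕ) (hN : 5 ≤ N)
    (μ lam : ℕ → ℝ)
    (hμlam : ∀ j, 1 ≤ j → j ≤ N - 1 →
      μ j ∈ Set.Ioo (0 : ℝ) 1 ∧ lam j ∈ Set.Ioo (0 : ℝ) 1 ∧ μ j + lam j = 1)
    (β₁ β₂ : ℝ)
    (hβ₁ : β₁ = (1 - 2 * μ 1) / (2 * (2 - μ 1)))
    (hβ₂ : β₂ = (1 - 2 * lam (N - 1)) / (2 * (2 - lam (N - 1))))
    (A : Matrix (Fin (N - 1)) (Fin (N - 1)) ℝ)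
    (hA : ∀ i j : Fin (N - 1), A i j =
      if (i : ℕ) + 1 = 1 then
        (if (j : ℕ) + 1 = 1 then 2 - μ 1
         else if (j : ℕ) + 1 = 2 then (1 - 2 * μ 1) / 2 else 0)
      else if (i : ℕ) + 1 = 2 then
        (if (j : ℕ) + 1 = 1 then μ 2
         else if (j : ℕ) + 1 = 2 then 2 - β₁ * μ 2
         else if (j : ℕ) + 1 = 3 then lam 2 else 0)
      else if (i : ℕ) + 1 = N - 2 then
        (if (j : ℕ) + 1 = N - 3 then μ (N - 2)
         else if (j : ℕ) + 1 = N - 2 then 2 - β₂ * lam (N - 2)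
         else if (j : ℕ) + 1 = N - 1 then lam (N - 2) else 0)
      else if (i : ℕ) + 1 = N - 1 then
        (if (j : ℕ) + 1 = N - 2 then (1 - 2 * lam (N - 1)) / 2
         else if (j : ℕ) + 1 = N - 1 then 2 - lam (N - 1) else 0)
      else
        (if (j : ℕ) + 1 + 1 = (i : ℕ) + 1 then μ ((i : ℕ) + 1)
         else if (j : ℕ) = (i : ℕ) then 2
         else if (j : ℕ) + 1 = (i : ℕ) + 1 + 1 then lam ((i : ℕ) + 1) else 0)) :
    β₁ ∈ Set.Ioo (-(1 / 2) : ℝ) (1 / 4) ∧ β₂ ∈ Set.Ioo (-(1 / 2) : ℝ) (1 / 4) ∧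
    (∀ i, ∑ j ∈ Finset.univ.erase i, |A i j| + 1 / 2 ≤ |A i i|) ∧
    IsUnit A ∧ rowSumNorm A⁻¹ ≤ 2 := by
  obtain rfl : A = notAKnotMatrix N μ lam β₁ β₂ := Matrix.ext hA
  have hb₁ : β₁ ∈ Set.Ioo (-(1 / 2) : ℝ) (1 / 4) :=
    hβ₁ ▸ one_sub_two_mul_div_mem_Ioo (hμlam 1 le_rfl (by omega)).1
  have hb₂ : β₂ ∈ Set.Ioo (-(1 / 2) : ℝ) (1 / 4) :=
    hβ₂ ▸ one_sub_two_mul_div_mem_Ioo (hμlam (N - 1) (by omega) le_rfl).2.1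
  have hdom := notAKnotMatrix_diagDominantBy hN hμlam hb₁.2 hb₂.2
  refine ⟨hb₁, hb₂, hdom, hdom.isUnit one_half_pos, ?_⟩
  simpa using hdom.rowSumNorm_inv_le one_half_pos
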